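/- Let λ > 0, M > 0, p satisfy λe^{pM} = λ + p with p ≠ 0, k ∈ ℝ, and r(x) = k(e^{px} − e^{−λx}). Then the solution g₁(x) = r(x) + λ∫₀^x r(t) dt of the Volterra equation g₁(x) = ∫₀^x λe^{−λ(x−u)} g₁(u) du + r(x) equals g₁(x) = k (λ/p) e^{pM} (e^{px} − 1). -/

import Mathlib

/-!
Since `λ ∫₀^x e^{-λt} dt = 1 - e^{-λx}`, the `e^{-λx}` part of `r` cancels in `r + λ∫₀^x r`,
leaving `k (1 + λ/p) (e^{px} - 1)`; the fixed-point relation rewrites `1 + λ/p` as `(λ/p) e^{pM}`.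
-/

open Real MeasureTheory

theorem integral_exp_mul {c : ℝ} (hc : c ≠ 0) (a b : ℝ) :
    ∫ t in a..b, exp (c * t) = (exp (c * b) - exp (c * a)) / c := by
  rw [intervalIntegral.integral_comp_mul_left (fun t => exp t) hc, integral_exp, smul_eq_mul,
    inv_mul_eq_div]

theorem intervalIntegrable_exp_mul (c a b : ℝ) :
    IntervalIntegrable (fun t => exp (c * t)) volume a b :=
  (continuous_exp.comp (continuous_const_mul c)).intervalIntegrable a b

theorem exp_sub_exp_add_mul_integral {lam p : ℝ} (hlam : lam ≠ 0) (hp : p ≠ 0) (k x : ℝ) :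
    k * (exp (p * x) - exp (-lam * x)) +
        lam * ∫ t in (0 : ℝ)..x, k * (exp (p * t) - exp (-lam * t)) =
      k * ((lam + p) / p) * (exp (p * x) - 1) := by
  rw [intervalIntegral.integral_const_mul,
    intervalIntegral.integral_sub (intervalIntegrable_exp_mul p 0 x)
      (intervalIntegrable_exp_mul (-lam) 0 x),
    integral_exp_mul hp, integral_exp_mul (neg_ne_zero.mpr hlam)]
  simp only [mul_zero, exp_zero]
  field_simp
  ring

theorem stmt8_general (lam M p k : ℝ) (hp : p ≠ 0)
    (heq : lam * Real.exp (p * M) = lam + p)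
    (r : ℝ → ℝ) (hr : ∀ x, r x = k * (Real.exp (p * x) - Real.exp (-lam * x))) :
    ∀ x, r x + lam * (∫ t in (0 : ℝ)..x, r t) =
      k * (lam / p) * Real.exp (p * M) * (Real.exp (p * x) - 1) := by
  have hlam : lam ≠ 0 := by
    rintro rfl
    exact hp (by simpa using heq.symm)
  intro x
  rw [show r = fun t => k * (exp (p * t) - exp (-lam * t)) from funext hr,
    exp_sub_exp_add_mul_integral hlam hp, ← heq]
  ring

/-- With forcing term `r(x) = k(e^{px} - e^{-λx})` and the fixed-point relation
`λe^{pM} = λ + p` (`p ≠ 0`), the Volterra solution `r(x) + λ∫₀^x r(t) dt` equals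
`k (λ/p) e^{pM} (e^{px} - 1)`. -/
theorem stmt8 (lam M p k : ℝ) (hlam : 0 < lam) (hM : 0 < M) (hp : p ≠ 0)
    (heq : lam * Real.exp (p * M) = lam + p)
    (r : ℝ → ℝ) (hr : ∀ x, r x = k * (Real.exp (p * x) - Real.exp (-lam * x))) :
    ∀ x, r x + lam * (∫ t in (0 : ℝ)..x, r t) =
      k * (lam / p) * Real.exp (p * M) * (Real.exp (p * x) - 1) :=
  stmt8_general lam M p k hp heq r hr
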